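/- arXiv:2604.19655 — 5 statements merged into one kernel-verified Lean document; each statement's English description precedes it below -/
import Mathlib

section
/- Let V be a finite-dimensional real vector space, J : V → V* an invertible skew-adjoint linear map (a constant symplectic operator) and K : V → V* a skew-adjoint linear map, such that the Nijenhuis tensor of R = J⁻¹ ∘ K vanishes, i.e. [R X, R Y] - R[R X, Y] - R[X, R Y] + R²[X, Y] = 0 for all vector fields X, Y on V (where R acts fiberwise and may vary over V). Suppose the 2-forms ω_k(X,Y) = ⟨J X, R^k Y⟩ satisfy ω_k(R X, Y) = ω_k(X, R Y) for all k ≥ 0. If ω_{k-1}, ω_k are closed and the Nijenhuis tensor of R vanishes, then dω_{k+1}(X,Y,Z) = dω_k(R X,Y,Z) + dω_k(X,R Y,Z) - dω_{k-1}(R X,R Y,Z) for all vector fields X,Y,Z; in particular if ω_0 and ω_1 are closed and R is Nijenhuis, all ω_k are closed. -/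
open scoped Topology

variable {V : Type*} [NormedAddCommGroup V] [NormedSpace ℝ V]

/-- Lie bracket of vector fields on the vector space `V`. -/
noncomputable def vlie (X Y : V → V) : V → V :=
  fun u => fderiv ℝ Y u (X u) - fderiv ℝ X u (Y u)

/-- Action of a vector field on a function. -/
noncomputable def vact (X : V → V) (f : V → ℝ) : V → ℝ :=
  fun u => fderiv ℝ f u (X u)

/-- Pointwise application of a (1,1)-tensor field `R` to a vector field. -/
def rapp (R : V → (V →L[ℝ] V)) (X : V → V) : V → V :=
  fun u => R u (X u)

/-- The 2-forms `ω_k(X,Y) = ⟨J X, R^k Y⟩`. -/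
noncomputable def omegaK (J : V →L[ℝ] V →L[ℝ] ℝ) (R : V → (V →L[ℝ] V))
    (k : ℕ) (X Y : V → V) : V → ℝ :=
  fun u => J (X u) (((R u) ^ k) (Y u))

/-- Exterior derivative of a 2-form given on vector fields. -/
noncomputable def dOm (ω : (V → V) → (V → V) → (V → ℝ)) (X Y Z : V → V) : V → ℝ :=
  fun u =>
    vact X (ω Y Z) u - vact Y (ω X Z) u + vact Z (ω X Y) u
      - ω (vlie X Y) Z u + ω (vlie X Z) Y u - ω (vlie Y Z) X u

/-- `ω_k` is closed (on smooth vector fields). -/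
def closedK (J : V →L[ℝ] V →L[ℝ] ℝ) (R : V → (V →L[ℝ] V)) (k : ℕ) : Prop :=
  ∀ X Y Z : V → V, ContDiff ℝ (⊤ : ℕ∞) X → ContDiff ℝ (⊤ : ℕ∞) Y → ContDiff ℝ (⊤ : ℕ∞) Z →
    ∀ u : V, dOm (omegaK J R k) X Y Z u = 0

/-- for a constant invertible skew-adjoint `J` and `R = J⁻¹ K`
with vanishing Nijenhuis tensor and the `R`-symmetry `ω_k(RX,Y) = ω_k(X,RY)`,
if `ω_{k-1}` and `ω_k` are closed then
`dω_{k+1}(X,Y,Z) = dω_k(RX,Y,Z) + dω_k(X,RY,Z) - dω_{k-1}(RX,RY,Z)`;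
in particular, if `ω_0` and `ω_1` are closed then all `ω_k` are closed. -/
theorem stmt_2
    (J : V →L[ℝ] V →L[ℝ] ℝ)
    (hJskew : ∀ x y : V, J x y = - J y x)
    (hJinv : Function.Bijective (fun v : V => J v))
    (R : V → (V →L[ℝ] V)) (hRsmooth : ContDiff ℝ (⊤ : ℕ∞) R)
    (hNij : ∀ X Y : V → V, ContDiff ℝ (⊤ : ℕ∞) X → ContDiff ℝ (⊤ : ℕ∞) Y → ∀ u : V,
      vlie (rapp R X) (rapp R Y) u - rapp R (vlie (rapp R X) Y) u
        - rapp R (vlie X (rapp R Y)) u + rapp R (rapp R (vlie X Y)) u = 0)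
    (hsymm : ∀ (k : ℕ) (X Y : V → V) (u : V),
      omegaK J R k (rapp R X) Y u = omegaK J R k X (rapp R Y) u) :
    (∀ k : ℕ, 1 ≤ k → closedK J R (k - 1) → closedK J R k →
      ∀ X Y Z : V → V, ContDiff ℝ (⊤ : ℕ∞) X → ContDiff ℝ (⊤ : ℕ∞) Y → ContDiff ℝ (⊤ : ℕ∞) Z →
        ∀ u : V,
          dOm (omegaK J R (k + 1)) X Y Z u =
            dOm (omegaK J R k) (rapp R X) Y Z u
              + dOm (omegaK J R k) X (rapp R Y) Z u
              - dOm (omegaK J R (k - 1)) (rapp R X) (rapp R Y) Z u) ∧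
    (closedK J R 0 → closedK J R 1 → ∀ k : ℕ, closedK J R k) := by
  -- shifting `R` from the second argument to the exponent
  have h1 : ∀ (j : ℕ) (A B : V → V),
      omegaK J R j A (rapp R B) = omegaK J R (j + 1) A B := by
    intro j A B; funext u
    simp [omegaK, rapp, pow_succ, ContinuousLinearMap.mul_apply]
  -- shifting `R` from the first argument to the exponent
  have h2 : ∀ (j : ℕ) (A B : V → V),
      omegaK J R j (rapp R A) B = omegaK J R (j + 1) A B := by
    intro j A B; funext u
    rw [hsymm j A B u]
    exact congrFun (h1 j A B) u
  -- the core identity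
  have key : ∀ (m : ℕ) (X Y Z : V → V), ContDiff ℝ (⊤ : ℕ∞) X → ContDiff ℝ (⊤ : ℕ∞) Y → ∀ u : V,
      dOm (omegaK J R (m + 2)) X Y Z u =
        dOm (omegaK J R (m + 1)) (rapp R X) Y Z u
          + dOm (omegaK J R (m + 1)) X (rapp R Y) Z u
          - dOm (omegaK J R m) (rapp R X) (rapp R Y) Z u := by
    intro m X Y Z hX hY u
    have hN := hNij X Y hX hY u
    have hNe : vlie (rapp R X) (rapp R Y) u
        = rapp R (vlie (rapp R X) Y) u + rapp R (vlie X (rapp R Y)) u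
          - rapp R (rapp R (vlie X Y)) u := by
      rw [← sub_eq_zero, ← hN]; abel
    have hbig : omegaK J R m (vlie (rapp R X) (rapp R Y)) Z u
        = omegaK J R m (rapp R (vlie (rapp R X) Y)) Z u
          + omegaK J R m (rapp R (vlie X (rapp R Y))) Z u
          - omegaK J R m (rapp R (rapp R (vlie X Y))) Z u := by
      simp only [omegaK, hNe, map_add, map_sub, ContinuousLinearMap.add_apply,
        ContinuousLinearMap.sub_apply]
    simp only [dOm, hbig, h1, h2, show m + 1 + 1 = m + 2 from rfl]
    ring
  refine ⟨?_, ?_⟩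
  · intro k hk _ _ X Y Z hX hY hZ u
    obtain ⟨m, rfl⟩ := Nat.exists_eq_add_of_le' hk
    simp only [Nat.add_sub_cancel]
    exact key m X Y Z hX hY u
  · intro h0 hc1 k
    induction k using Nat.strong_induction_on with
    | _ k ih =>
      match k with
      | 0 => exact h0
      | 1 => exact hc1
      | (m + 2) =>
        intro X Y Z hX hY hZ u
        have hRX : ContDiff ℝ (⊤ : ℕ∞) (rapp R X) := hRsmooth.clm_apply hX
        have hRY : ContDiff ℝ (⊤ : ℕ∞) (rapp R Y) := hRsmooth.clm_apply hY
        rw [key m X Y Z hX hY u,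
          ih (m + 1) (by omega) (rapp R X) Y Z hRX hY hZ u,
          ih (m + 1) (by omega) X (rapp R Y) Z hX hRY hZ u,
          ih m (by omega) (rapp R X) (rapp R Y) Z hRX hRY hZ u]
        ring
end

section
/- Let J be an invertible skew-adjoint linear operator on a real inner product space and K a skew-adjoint linear operator, and let Q_0, Q_1, Q_2, ... be a sequence of vectors satisfying the Lenard recursion K Q_i = J Q_{i+1} for all i ≥ 0. Then the Q_i are in involution with respect to both operators: ⟨Q_i, J Q_j⟩ = 0 and ⟨Q_i, K Q_j⟩ = 0 for all i, j ≥ 0. -/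
/-- Lenard recursion implies involution.  If `J`, `K` are
skew-adjoint with respect to a symmetric bilinear pairing `B`, `J` is
invertible, and `K Qᵢ = J Qᵢ₊₁`, then `⟨Qᵢ, J Qⱼ⟩ = 0` and `⟨Qᵢ, K Qⱼ⟩ = 0`
for all `i, j`. -/
theorem stmt_3
    {V : Type*} [AddCommGroup V] [Module ℝ V]
    (B : V →ₗ[ℝ] V →ₗ[ℝ] ℝ)
    (hsym : ∀ x y : V, B x y = B y x)
    (J K : V →ₗ[ℝ] V)
    (hJ : ∀ x y : V, B (J x) y = - B x (J y))
    (hK : ∀ x y : V, B (K x) y = - B x (K y))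
    (hJinv : Function.Bijective J)
    (Q : ℕ → V) (hQ : ∀ i : ℕ, K (Q i) = J (Q (i + 1))) :
    ∀ i j : ℕ, B (Q i) (J (Q j)) = 0 ∧ B (Q i) (K (Q j)) = 0 := by
  -- shift identity: a(i, j+1) = a(i+1, j)
  have shift : ∀ i j : ℕ, B (Q i) (J (Q (j + 1))) = B (Q (i + 1)) (J (Q j)) := by
    intro i j
    have h1 : B (Q i) (J (Q (j + 1))) = B (Q i) (K (Q j)) := by rw [hQ j]
    have h2 : B (Q i) (K (Q j)) = - B (K (Q i)) (Q j) := by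
      rw [hK]; ring
    rw [h1, h2, hQ i, hJ]
    ring
  -- a(i,j) depends only on i+j : a(i,j) = a(0, i+j)
  have dep : ∀ i j : ℕ, B (Q i) (J (Q j)) = B (Q 0) (J (Q (i + j))) := by
    intro i
    induction i with
    | zero => intro j; simp
    | succ n ih =>
      intro j
      have := shift n j
      rw [← this, ih (j + 1)]
      ring_nf
  -- antisymmetry: a(i,j) = -a(j,i)
  have anti : ∀ i j : ℕ, B (Q i) (J (Q j)) = - B (Q j) (J (Q i)) := by
    intro i j
    rw [hsym (Q i) (J (Q j)), hJ]
  have hzero : ∀ i j : ℕ, B (Q i) (J (Q j)) = 0 := by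
    intro i j
    have h1 := dep i j
    have h2 := dep j i
    have h3 := anti i j
    rw [h1, h2, Nat.add_comm j i] at h3
    linarith
  intro i j
  refine ⟨hzero i j, ?_⟩
  rw [hQ j] at *
  exact hzero i (j + 1)
end

section
/- Let J, K be skew-adjoint operators and Q_0, Q_1, ... satisfy K Q_i = J Q_{i+1}. If i - j is even, then ⟨Q_i, J Q_j⟩ = ⟨Q_{(i+j)/2}, J Q_{(i+j)/2}⟩, and this vanishes by skew-adjointness of J; if i - j is odd, then ⟨Q_i, J Q_j⟩ = ⟨Q_{(i+j-1)/2}, K Q_{(i+j-1)/2}⟩, which vanishes by skew-adjointness of K. -/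
/-- the parity splitting in the Lenard involution argument.
If `i - j` is even then `⟨Qᵢ, J Qⱼ⟩ = ⟨Q_{(i+j)/2}, J Q_{(i+j)/2}⟩ = 0`,
and if `i - j` is odd then
`⟨Qᵢ, J Qⱼ⟩ = ⟨Q_{(i+j-1)/2}, K Q_{(i+j-1)/2}⟩ = 0`. -/
theorem stmt_4
    {V : Type*} [AddCommGroup V] [Module ℝ V]
    (B : V →ₗ[ℝ] V →ₗ[ℝ] ℝ)
    (hsym : ∀ x y : V, B x y = B y x)
    (J K : V →ₗ[ℝ] V)
    (hJ : ∀ x y : V, B (J x) y = - B x (J y))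
    (hK : ∀ x y : V, B (K x) y = - B x (K y))
    (hJinv : Function.Bijective J)
    (Q : ℕ → V) (hQ : ∀ i : ℕ, K (Q i) = J (Q (i + 1))) :
    ∀ i j : ℕ,
      ((i + j) % 2 = 0 →
        B (Q i) (J (Q j)) = B (Q ((i + j) / 2)) (J (Q ((i + j) / 2))) ∧
        B (Q i) (J (Q j)) = 0) ∧
      ((i + j) % 2 = 1 →
        B (Q i) (J (Q j)) = B (Q ((i + j - 1) / 2)) (K (Q ((i + j - 1) / 2))) ∧
        B (Q i) (J (Q j)) = 0) := by
  have diagJ : ∀ x : V, B x (J x) = 0 := by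
    intro x
    have h1 := hJ x x
    have h2 := hsym (J x) x
    linarith
  have diagK : ∀ x : V, B x (K x) = 0 := by
    intro x
    have h1 := hK x x
    have h2 := hsym (K x) x
    linarith
  have shift : ∀ i j : ℕ, B (Q (i + 1)) (J (Q j)) = B (Q i) (J (Q (j + 1))) := by
    intro i j
    have h1 : B (Q i) (J (Q (j + 1))) = B (Q i) (K (Q j)) := by rw [hQ]
    have h2 : B (K (Q i)) (Q j) = - B (Q i) (K (Q j)) := hK _ _
    have h3 := hJ (Q (i + 1)) (Q j)
    rw [hQ i] at h2
    linarith
  have const : ∀ k i j : ℕ, B (Q (i + k)) (J (Q j)) = B (Q i) (J (Q (j + k))) := by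
    intro k
    induction k with
    | zero => intro i j; rfl
    | succ k ih =>
      intro i j
      have h1 : i + (k + 1) = (i + k) + 1 := by omega
      have h2 : j + (k + 1) = (j + 1) + k := by omega
      rw [h1, shift (i + k) j, h2, ← ih i (j + 1)]
  have Z : ∀ i j : ℕ, B (Q i) (J (Q j)) = 0 := by
    intro i j
    rcases Nat.even_or_odd (i + j) with he | ho
    · set m := (i + j) / 2 with hm
      rcases le_or_gt i m with hi | hi
      · have e1 : i + (m - i) = m := by omega
        have e2 : m + (m - i) = j := by
          rcases he with ⟨t, ht⟩; omega
        have h := const (m - i) i m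
        rw [e1, e2] at h
        rw [← h]; exact diagJ _
      · have e1 : m + (i - m) = i := by omega
        have e2 : j + (i - m) = m := by
          rcases he with ⟨t, ht⟩; omega
        have h := const (i - m) m j
        rw [e1, e2] at h
        rw [h]; exact diagJ _
    · set m := (i + j - 1) / 2 with hm
      have hn : i + j = 2 * m + 1 := by
        rcases ho with ⟨t, ht⟩; omega
      have key : B (Q m) (J (Q (m + 1))) = 0 := by
        rw [← hQ m]; exact diagK _
      rcases le_or_gt i m with hi | hi
      · have e1 : i + (m - i) = m := by omega
        have e2 : (m + 1) + (m - i) = j := by omega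
        have h := const (m - i) i (m + 1)
        rw [e1, e2] at h
        rw [← h]; exact key
      · have e1 : (m + 1) + (i - (m + 1)) = i := by omega
        have e2 : j + (i - (m + 1)) = m := by omega
        have h := const (i - (m + 1)) (m + 1) j
        rw [e1, e2] at h
        rw [h]
        have h4 := hJ (Q m) (Q (m + 1))
        have h5 := hsym (J (Q m)) (Q (m + 1))
        have h6 := hsym (Q (m + 1)) (J (Q m))
        linarith
  intro i j
  constructor
  · intro _
    exact ⟨by rw [Z, Z], Z i j⟩
  · intro _
    refine ⟨?_, Z i j⟩
    rw [Z i j]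
    exact (diagK _).symm
end

section
/- For the dispersionless pKdV Lagrangian multiform with L_{01} = -(1/2) ū_x³ + (1/2) ū_x ū_{t_1}, L_{02} = -(5/8) ū_x⁴ + (1/2) ū_x ū_{t_2}, L_{12} = (3/8) ū_x⁵ - (5/4) ū_x³ ū_{t_1} + (3/4) ū_x² ū_{t_2}, the coefficient of dx ∧ dt_1 ∧ dt_2 in dL, namely P_{012} = ∂_{t_2} L_{01} - ∂_{t_1} L_{02} + ∂_x L_{12}, equals (1/2)(ū_{t_1} - (3/2)ū_x²) ∂_x(ū_{t_2} - (5/2)ū_x³) - (1/2)(ū_{t_2} - (5/2)ū_x³) ∂_x(ū_{t_1} - (3/2)ū_x²); in particular P_{012} vanishes to second order on solutions of ū_{t_1} = (3/2)ū_x², ū_{t_2} = (5/2)ū_x³. -/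
/-- Partial derivative in the `x` slot. -/
noncomputable def px (f : ℝ → ℝ → ℝ → ℝ) : ℝ → ℝ → ℝ → ℝ :=
  fun x t1 t2 => deriv (fun y => f y t1 t2) x

/-- Partial derivative in the `t₁` slot. -/
noncomputable def pt1 (f : ℝ → ℝ → ℝ → ℝ) : ℝ → ℝ → ℝ → ℝ :=
  fun x t1 t2 => deriv (fun y => f x y t2) t1

/-- Partial derivative in the `t₂` slot. -/
noncomputable def pt2 (f : ℝ → ℝ → ℝ → ℝ) : ℝ → ℝ → ℝ → ℝ :=
  fun x t1 t2 => deriv (fun y => f x t1 y) t2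

private lemma clm_line_hasDerivAt {g : ℝ × ℝ × ℝ → (ℝ × ℝ × ℝ) →L[ℝ] ℝ}
    (hg : Differentiable ℝ g) {l : ℝ → ℝ × ℝ × ℝ} {v : ℝ × ℝ × ℝ} {s : ℝ}
    (hl : HasDerivAt l v s) (w : ℝ × ℝ × ℝ) :
    HasDerivAt (fun y => g (l y) w) (fderiv ℝ g (l s) v w) s := by
  have h1 : HasFDerivAt (fun p => g p w)
      ((ContinuousLinearMap.apply ℝ ℝ w).comp (fderiv ℝ g (l s))) (l s) :=
    (ContinuousLinearMap.apply ℝ ℝ w).hasFDerivAt.comp (l s) (hg (l s)).hasFDerivAt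
  simpa [Function.comp_def] using h1.comp_hasDerivAt s hl

/-- for the dispersionless pKdV multiform with
`L₀₁ = -(1/2)ūₓ³ + (1/2)ūₓ ū_{t₁}`, `L₀₂ = -(5/8)ūₓ⁴ + (1/2)ūₓ ū_{t₂}`,
`L₁₂ = (3/8)ūₓ⁵ - (5/4)ūₓ³ ū_{t₁} + (3/4)ūₓ² ū_{t₂}`, the coefficient
`P₀₁₂ = ∂_{t₂} L₀₁ - ∂_{t₁} L₀₂ + ∂ₓ L₁₂` of `dL` has the double-zero form
`(1/2)(ū_{t₁} - (3/2)ūₓ²)∂ₓ(ū_{t₂} - (5/2)ūₓ³)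
  - (1/2)(ū_{t₂} - (5/2)ūₓ³)∂ₓ(ū_{t₁} - (3/2)ūₓ²)`;
in particular `P₀₁₂` vanishes on solutions of the two flows. -/
theorem stmt_14 (u : ℝ → ℝ → ℝ → ℝ)
    (hu : ContDiff ℝ (⊤ : ℕ∞) (fun p : ℝ × ℝ × ℝ => u p.1 p.2.1 p.2.2)) :
    (∀ x t1 t2 : ℝ,
      pt2 (fun a b c => -(1 / 2) * (px u a b c) ^ 3
            + (1 / 2) * px u a b c * pt1 u a b c) x t1 t2
        - pt1 (fun a b c => -(5 / 8) * (px u a b c) ^ 4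
            + (1 / 2) * px u a b c * pt2 u a b c) x t1 t2
        + px (fun a b c => (3 / 8) * (px u a b c) ^ 5
            - (5 / 4) * (px u a b c) ^ 3 * pt1 u a b c
            + (3 / 4) * (px u a b c) ^ 2 * pt2 u a b c) x t1 t2
      = (1 / 2) * (pt1 u x t1 t2 - (3 / 2) * (px u x t1 t2) ^ 2)
          * px (fun a b c => pt2 u a b c - (5 / 2) * (px u a b c) ^ 3) x t1 t2
        - (1 / 2) * (pt2 u x t1 t2 - (5 / 2) * (px u x t1 t2) ^ 3)
          * px (fun a b c => pt1 u a b c - (3 / 2) * (px u a b c) ^ 2) x t1 t2) ∧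
    ((∀ x t1 t2 : ℝ, pt1 u x t1 t2 = (3 / 2) * (px u x t1 t2) ^ 2) →
     (∀ x t1 t2 : ℝ, pt2 u x t1 t2 = (5 / 2) * (px u x t1 t2) ^ 3) →
      ∀ x t1 t2 : ℝ,
        pt2 (fun a b c => -(1 / 2) * (px u a b c) ^ 3
              + (1 / 2) * px u a b c * pt1 u a b c) x t1 t2
          - pt1 (fun a b c => -(5 / 8) * (px u a b c) ^ 4
              + (1 / 2) * px u a b c * pt2 u a b c) x t1 t2
          + px (fun a b c => (3 / 8) * (px u a b c) ^ 5
              - (5 / 4) * (px u a b c) ^ 3 * pt1 u a b c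
              + (3 / 4) * (px u a b c) ^ 2 * pt2 u a b c) x t1 t2 = 0) := by
  set F : ℝ × ℝ × ℝ → ℝ := fun p => u p.1 p.2.1 p.2.2 with hFdef
  have hFd : Differentiable ℝ F := hu.differentiable (by simp)
  set g : ℝ × ℝ × ℝ → (ℝ × ℝ × ℝ) →L[ℝ] ℝ := fun p => fderiv ℝ F p with hgdef
  have hgc : ContDiff ℝ (⊤ : ℕ∞) g := hu.fderiv_right (by simp)
  have hgd : Differentiable ℝ g := hgc.differentiable (by simp)
  -- lines
  have lx : ∀ a b c : ℝ, HasDerivAt (fun y => ((y, b, c) : ℝ × ℝ × ℝ)) (1, 0, 0) a :=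
    fun a b c => (hasDerivAt_id a).prodMk (hasDerivAt_const a (b, c))
  have l1 : ∀ a b c : ℝ, HasDerivAt (fun y => ((a, y, c) : ℝ × ℝ × ℝ)) (0, 1, 0) b :=
    fun a b c => (hasDerivAt_const b a).prodMk ((hasDerivAt_id b).prodMk (hasDerivAt_const b c))
  have l2 : ∀ a b c : ℝ, HasDerivAt (fun y => ((a, b, y) : ℝ × ℝ × ℝ)) (0, 0, 1) c :=
    fun a b c => (hasDerivAt_const c a).prodMk ((hasDerivAt_const c b).prodMk (hasDerivAt_id c))
  -- first partials as g
  have hpx : ∀ a b c : ℝ, px u a b c = g (a, b, c) (1, 0, 0) := fun a b c =>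
    by have h := ((hFd (a, b, c)).hasFDerivAt.comp_hasDerivAt a (lx a b c)).deriv; exact h
  have hpt1 : ∀ a b c : ℝ, pt1 u a b c = g (a, b, c) (0, 1, 0) := fun a b c =>
    by have h := ((hFd (a, b, c)).hasFDerivAt.comp_hasDerivAt b (l1 a b c)).deriv; exact h
  have hpt2 : ∀ a b c : ℝ, pt2 u a b c = g (a, b, c) (0, 0, 1) := fun a b c =>
    by have h := ((hFd (a, b, c)).hasFDerivAt.comp_hasDerivAt c (l2 a b c)).deriv; exact h
  -- symmetry of second derivative
  have hsymm : ∀ (p v w : ℝ × ℝ × ℝ), fderiv ℝ g p v w = fderiv ℝ g p w v := by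
    intro p v w
    exact second_derivative_symmetric (fun y => (hFd y).hasFDerivAt)
      (hgd p).hasFDerivAt v w
  have main : ∀ x t1 t2 : ℝ,
      pt2 (fun a b c => -(1 / 2) * (px u a b c) ^ 3
            + (1 / 2) * px u a b c * pt1 u a b c) x t1 t2
        - pt1 (fun a b c => -(5 / 8) * (px u a b c) ^ 4
            + (1 / 2) * px u a b c * pt2 u a b c) x t1 t2
        + px (fun a b c => (3 / 8) * (px u a b c) ^ 5
            - (5 / 4) * (px u a b c) ^ 3 * pt1 u a b c
            + (3 / 4) * (px u a b c) ^ 2 * pt2 u a b c) x t1 t2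
      = (1 / 2) * (pt1 u x t1 t2 - (3 / 2) * (px u x t1 t2) ^ 2)
          * px (fun a b c => pt2 u a b c - (5 / 2) * (px u a b c) ^ 3) x t1 t2
        - (1 / 2) * (pt2 u x t1 t2 - (5 / 2) * (px u x t1 t2) ^ 3)
          * px (fun a b c => pt1 u a b c - (3 / 2) * (px u a b c) ^ 2) x t1 t2 := by
    intro x t1 t2
    simp only [hpx, hpt1, hpt2]
    simp only [px, pt1, pt2]
    have A2 := clm_line_hasDerivAt hgd (l2 x t1 t2) (1, 0, 0)
    have B2 := clm_line_hasDerivAt hgd (l2 x t1 t2) (0, 1, 0)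
    have A1 := clm_line_hasDerivAt hgd (l1 x t1 t2) (1, 0, 0)
    have C1 := clm_line_hasDerivAt hgd (l1 x t1 t2) (0, 0, 1)
    have A0 := clm_line_hasDerivAt hgd (lx x t1 t2) (1, 0, 0)
    have B0 := clm_line_hasDerivAt hgd (lx x t1 t2) (0, 1, 0)
    have C0 := clm_line_hasDerivAt hgd (lx x t1 t2) (0, 0, 1)
    have E1 : deriv (fun y => -(1 / 2) * g (x, t1, y) (1, 0, 0) ^ 3
        + 1 / 2 * g (x, t1, y) (1, 0, 0) * g (x, t1, y) (0, 1, 0)) t2 = _ :=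
      (((A2.pow 3).const_mul (-(1 / 2) : ℝ)).add
        (((A2.const_mul ((1 : ℝ) / 2)).mul B2))).deriv
    have E2 : deriv (fun y => -(5 / 8) * g (x, y, t2) (1, 0, 0) ^ 4
        + 1 / 2 * g (x, y, t2) (1, 0, 0) * g (x, y, t2) (0, 0, 1)) t1 = _ :=
      (((A1.pow 4).const_mul (-(5 / 8) : ℝ)).add
        (((A1.const_mul ((1 : ℝ) / 2)).mul C1))).deriv
    have E3 : deriv (fun y => 3 / 8 * g (y, t1, t2) (1, 0, 0) ^ 5
        - 5 / 4 * g (y, t1, t2) (1, 0, 0) ^ 3 * g (y, t1, t2) (0, 1, 0)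
        + 3 / 4 * g (y, t1, t2) (1, 0, 0) ^ 2 * g (y, t1, t2) (0, 0, 1)) x = _ :=
      ((((A0.pow 5).const_mul ((3 : ℝ) / 8)).sub
        (((A0.pow 3).const_mul ((5 : ℝ) / 4)).mul B0)).add
        (((A0.pow 2).const_mul ((3 : ℝ) / 4)).mul C0)).deriv
    have E4 : deriv (fun y => g (y, t1, t2) (0, 0, 1)
        - 5 / 2 * g (y, t1, t2) (1, 0, 0) ^ 3) x = _ :=
      (C0.sub ((A0.pow 3).const_mul ((5 : ℝ) / 2))).deriv
    have E5 : deriv (fun y => g (y, t1, t2) (0, 1, 0)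
        - 3 / 2 * g (y, t1, t2) (1, 0, 0) ^ 2) x = _ :=
      (B0.sub ((A0.pow 2).const_mul ((3 : ℝ) / 2))).deriv
    rw [E1, E2, E3, E4, E5]
    rw [hsymm (x, t1, t2) (0, 0, 1) (1, 0, 0), hsymm (x, t1, t2) (0, 1, 0) (1, 0, 0),
      hsymm (x, t1, t2) (0, 0, 1) (0, 1, 0)]
    push_cast
    simp only [Pi.pow_apply]
    ring
  refine ⟨main, fun h1 h2 x t1 t2 => ?_⟩
  rw [main x t1 t2, h1 x t1 t2, h2 x t1 t2]
  ring
end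

section
/- The system φ_{t_1 t_2} = -√(-(φ_{t_2}² - 1)/φ_{xx}) - φ_{x t_2}/φ_{xx} and φ_{xx t_1} = 2√(-φ_{xx}/(φ_{t_2}² - 1)) φ_{t_2} + φ_{xxx}/φ_{xx} implies the constant astigmatism equation for u = φ_{xx}: ∂_x²(1/φ_{xx}) + φ_{xx t_1 t_1} + 2 = 0, on any domain where φ is smooth, φ_{xx} ≠ 0, and -(φ_{t_2}² - 1)/φ_{xx} > 0. -/
namespace Aux

abbrev E3 := ℝ × ℝ × ℝ
def unc (f : ℝ → ℝ → ℝ → ℝ) : E3 → ℝ := fun p => f p.1 p.2.1 p.2.2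

def ex : E3 := (1, 0, 0)
def e1 : E3 := (0, 1, 0)
def e2 : E3 := (0, 0, 1)

theorem smooth_pd {F : E3 → ℝ} (hF : ContDiff ℝ (⊤ : ℕ∞) F) (e : E3) :
    ContDiff ℝ (⊤ : ℕ∞) (fun p => fderiv ℝ F p e) :=
  (hF.fderiv_right (by simp)).clm_apply contDiff_const

theorem hasDerivAt_slice_x {F : E3 → ℝ} (hF : ContDiff ℝ (⊤ : ℕ∞) F) (x t1 t2 : ℝ) :
    HasDerivAt (fun y => F (y, t1, t2)) (fderiv ℝ F (x, t1, t2) ex) x :=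
  ((hF.differentiable (by simp) (x, t1, t2)).hasFDerivAt).comp_hasDerivAt x
    (HasDerivAt.prodMk (hasDerivAt_id x) (hasDerivAt_const x (t1, t2)))

theorem hasDerivAt_slice_t1 {F : E3 → ℝ} (hF : ContDiff ℝ (⊤ : ℕ∞) F) (x t1 t2 : ℝ) :
    HasDerivAt (fun y => F (x, y, t2)) (fderiv ℝ F (x, t1, t2) e1) t1 :=
  ((hF.differentiable (by simp) (x, t1, t2)).hasFDerivAt).comp_hasDerivAt t1
    (HasDerivAt.prodMk (hasDerivAt_const t1 x) (HasDerivAt.prodMk (hasDerivAt_id t1) (hasDerivAt_const t1 t2)))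

theorem hasDerivAt_slice_t2 {F : E3 → ℝ} (hF : ContDiff ℝ (⊤ : ℕ∞) F) (x t1 t2 : ℝ) :
    HasDerivAt (fun y => F (x, t1, y)) (fderiv ℝ F (x, t1, t2) e2) t2 :=
  ((hF.differentiable (by simp) (x, t1, t2)).hasFDerivAt).comp_hasDerivAt t2
    (HasDerivAt.prodMk (hasDerivAt_const t2 x) (HasDerivAt.prodMk (hasDerivAt_const t2 t1) (hasDerivAt_id t2)))

theorem px_eq {f : ℝ → ℝ → ℝ → ℝ} (hf : ContDiff ℝ (⊤ : ℕ∞) (unc f)) (x t1 t2 : ℝ) :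
    px f x t1 t2 = fderiv ℝ (unc f) (x, t1, t2) ex :=
  (hasDerivAt_slice_x hf x t1 t2).deriv

theorem pt1_eq {f : ℝ → ℝ → ℝ → ℝ} (hf : ContDiff ℝ (⊤ : ℕ∞) (unc f)) (x t1 t2 : ℝ) :
    pt1 f x t1 t2 = fderiv ℝ (unc f) (x, t1, t2) e1 :=
  (hasDerivAt_slice_t1 hf x t1 t2).deriv

theorem pt2_eq {f : ℝ → ℝ → ℝ → ℝ} (hf : ContDiff ℝ (⊤ : ℕ∞) (unc f)) (x t1 t2 : ℝ) :
    pt2 f x t1 t2 = fderiv ℝ (unc f) (x, t1, t2) e2 :=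
  (hasDerivAt_slice_t2 hf x t1 t2).deriv

theorem unc_px {f : ℝ → ℝ → ℝ → ℝ} (hf : ContDiff ℝ (⊤ : ℕ∞) (unc f)) :
    unc (px f) = fun p => fderiv ℝ (unc f) p ex := by
  funext p; exact px_eq hf p.1 p.2.1 p.2.2

theorem unc_pt1 {f : ℝ → ℝ → ℝ → ℝ} (hf : ContDiff ℝ (⊤ : ℕ∞) (unc f)) :
    unc (pt1 f) = fun p => fderiv ℝ (unc f) p e1 := by
  funext p; exact pt1_eq hf p.1 p.2.1 p.2.2

theorem unc_pt2 {f : ℝ → ℝ → ℝ → ℝ} (hf : ContDiff ℝ (⊤ : ℕ∞) (unc f)) :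
    unc (pt2 f) = fun p => fderiv ℝ (unc f) p e2 := by
  funext p; exact pt2_eq hf p.1 p.2.1 p.2.2

theorem smooth_px {f : ℝ → ℝ → ℝ → ℝ} (hf : ContDiff ℝ (⊤ : ℕ∞) (unc f)) :
    ContDiff ℝ (⊤ : ℕ∞) (unc (px f)) := by rw [unc_px hf]; exact smooth_pd hf ex

theorem smooth_pt1 {f : ℝ → ℝ → ℝ → ℝ} (hf : ContDiff ℝ (⊤ : ℕ∞) (unc f)) :
    ContDiff ℝ (⊤ : ℕ∞) (unc (pt1 f)) := by rw [unc_pt1 hf]; exact smooth_pd hf e1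

theorem smooth_pt2 {f : ℝ → ℝ → ℝ → ℝ} (hf : ContDiff ℝ (⊤ : ℕ∞) (unc f)) :
    ContDiff ℝ (⊤ : ℕ∞) (unc (pt2 f)) := by rw [unc_pt2 hf]; exact smooth_pd hf e2

theorem pd_symm {F : E3 → ℝ} (hF : ContDiff ℝ (⊤ : ℕ∞) F) (p : E3) (v w : E3) :
    fderiv ℝ (fun q => fderiv ℝ F q v) p w = fderiv ℝ (fun q => fderiv ℝ F q w) p v := by
  have hd : ∀ q, HasFDerivAt F (fderiv ℝ F q) q := fun q =>
    (hF.differentiable (by simp) q).hasFDerivAt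
  have hd2 : HasFDerivAt (fderiv ℝ F) (fderiv ℝ (fderiv ℝ F) p) p :=
    (((hF.fderiv_right (m := 1) (WithTop.coe_le_coe.mpr le_top)).differentiable (by simp)) p).hasFDerivAt
  have hsymm := second_derivative_symmetric hd hd2 v w
  have key : ∀ e : E3, fderiv ℝ (fun q => fderiv ℝ F q e) p
      = (ContinuousLinearMap.apply ℝ ℝ e).comp (fderiv ℝ (fderiv ℝ F) p) := by
    intro e
    exact (((ContinuousLinearMap.apply ℝ ℝ e).hasFDerivAt).comp p hd2).fderiv
  rw [key v, key w]
  simpa using hsymm.symm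

theorem pt1_px_comm {f : ℝ → ℝ → ℝ → ℝ} (hf : ContDiff ℝ (⊤ : ℕ∞) (unc f)) (x t1 t2 : ℝ) :
    pt1 (px f) x t1 t2 = px (pt1 f) x t1 t2 := by
  have h1 : pt1 (px f) x t1 t2 = fderiv ℝ (unc (px f)) (x, t1, t2) e1 :=
    pt1_eq (smooth_px hf) x t1 t2
  have h2 : px (pt1 f) x t1 t2 = fderiv ℝ (unc (pt1 f)) (x, t1, t2) ex :=
    px_eq (smooth_pt1 hf) x t1 t2
  rw [h1, h2, unc_px hf, unc_pt1 hf]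
  exact pd_symm hf (x, t1, t2) ex e1

theorem hasDerivAt_px {f : ℝ → ℝ → ℝ → ℝ} (hf : ContDiff ℝ (⊤ : ℕ∞) (unc f)) (x t1 t2 : ℝ) :
    HasDerivAt (fun y => f y t1 t2) (px f x t1 t2) x := by
  rw [px_eq hf]; exact hasDerivAt_slice_x hf x t1 t2

theorem hasDerivAt_pt1 {f : ℝ → ℝ → ℝ → ℝ} (hf : ContDiff ℝ (⊤ : ℕ∞) (unc f)) (x t1 t2 : ℝ) :
    HasDerivAt (fun y => f x y t2) (pt1 f x t1 t2) t1 := by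
  rw [pt1_eq hf]; exact hasDerivAt_slice_t1 hf x t1 t2

end Aux

/-- the system
`φ_{t₁t₂} = -√(-(φ_{t₂}² - 1)/φₓₓ) - φ_{xt₂}/φₓₓ` and
`φ_{xxt₁} = 2√(-φₓₓ/(φ_{t₂}² - 1)) φ_{t₂} + φₓₓₓ/φₓₓ`
implies the constant astigmatism equation for `u = φₓₓ`:
`∂ₓ²(1/φₓₓ) + φ_{xx t₁ t₁} + 2 = 0`,
on a domain where `φ` is smooth, `φₓₓ ≠ 0` and `-(φ_{t₂}² - 1)/φₓₓ > 0`. -/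
theorem stmt_19 (φ : ℝ → ℝ → ℝ → ℝ)
    (hφ : ContDiff ℝ (⊤ : ℕ∞) (fun p : ℝ × ℝ × ℝ => φ p.1 p.2.1 p.2.2))
    (hdom : ∀ x t1 t2 : ℝ, px (px φ) x t1 t2 ≠ 0 ∧
      0 < -((pt2 φ x t1 t2) ^ 2 - 1) / px (px φ) x t1 t2)
    (hA : ∀ x t1 t2 : ℝ,
      pt1 (pt2 φ) x t1 t2
        = - Real.sqrt (-((pt2 φ x t1 t2) ^ 2 - 1) / px (px φ) x t1 t2)
          - px (pt2 φ) x t1 t2 / px (px φ) x t1 t2)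
    (hB : ∀ x t1 t2 : ℝ,
      pt1 (px (px φ)) x t1 t2
        = 2 * Real.sqrt (-(px (px φ) x t1 t2) / ((pt2 φ x t1 t2) ^ 2 - 1))
            * pt2 φ x t1 t2
          + px (px (px φ)) x t1 t2 / px (px φ) x t1 t2) :
    ∀ x t1 t2 : ℝ,
      px (px (fun a b c => 1 / px (px φ) a b c)) x t1 t2
        + pt1 (pt1 (px (px φ))) x t1 t2 + 2 = 0 := by
  intro x t1 t2
  have hφ' : ContDiff ℝ (⊤ : ℕ∞) (Aux.unc φ) := hφ
  set u := px (px φ) with hu_def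
  set v := pt2 φ with hv_def
  -- smoothness
  have hxs : ContDiff ℝ (⊤ : ℕ∞) (Aux.unc (px φ)) := Aux.smooth_px hφ'
  have hus : ContDiff ℝ (⊤ : ℕ∞) (Aux.unc u) := Aux.smooth_px hxs
  have hvs : ContDiff ℝ (⊤ : ℕ∞) (Aux.unc v) := Aux.smooth_pt2 hφ'
  have hws : ContDiff ℝ (⊤ : ℕ∞) (Aux.unc (px u)) := Aux.smooth_px hus
  have hpt1us : ContDiff ℝ (⊤ : ℕ∞) (Aux.unc (pt1 u)) := Aux.smooth_pt1 hus
  -- domain facts at the point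
  have hU : u x t1 t2 ≠ 0 := (hdom x t1 t2).1
  have hpos : 0 < -((v x t1 t2) ^ 2 - 1) / u x t1 t2 := (hdom x t1 t2).2
  have hden : (v x t1 t2) ^ 2 - 1 ≠ 0 := by
    intro h
    rw [h] at hpos; simp at hpos
  have hq0 : -(u x t1 t2) / ((v x t1 t2) ^ 2 - 1) ≠ 0 :=
    div_ne_zero (neg_ne_zero.2 hU) hden
  -- first x-derivative of 1/u, as a pointwise identity
  have h1 : ∀ a b c : ℝ, px (fun a b c => 1 / u a b c) a b c
      = -(px u a b c) / (u a b c) ^ 2 := by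
    intro a b c
    have hd : HasDerivAt (fun y => 1 / u y b c) _ a :=
      (hasDerivAt_const a (1 : ℝ)).div (Aux.hasDerivAt_px hus a b c) ((hdom a b c).1)
    have := hd.deriv
    show deriv (fun y => 1 / u y b c) a = _
    rw [this]; ring
  -- x-direction HasDerivAt facts at the point
  have hdu : HasDerivAt (fun y => u y t1 t2) (px u x t1 t2) x := Aux.hasDerivAt_px hus x t1 t2
  have hdv : HasDerivAt (fun y => v y t1 t2) (px v x t1 t2) x := Aux.hasDerivAt_px hvs x t1 t2
  have hdw : HasDerivAt (fun y => px u y t1 t2) (px (px u) x t1 t2) x :=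
    Aux.hasDerivAt_px hws x t1 t2
  -- T1
  have hd1 : HasDerivAt (fun y => -(px u y t1 t2) / (u y t1 t2) ^ 2) _ x :=
    hdw.neg.div (hdu.pow 2) (pow_ne_zero 2 hU)
  have hfe1 : (fun y => px (fun a b c => 1 / u a b c) y t1 t2)
      = fun y => -(px u y t1 t2) / (u y t1 t2) ^ 2 := funext fun y => h1 y t1 t2
  -- mixed partial: pt1 (px u) via x-derivative of RHS of hB
  have hdq : HasDerivAt (fun y => -(u y t1 t2) / ((v y t1 t2) ^ 2 - 1)) _ x :=
    hdu.neg.div ((hdv.pow 2).sub_const 1) hden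
  have hds := hdq.sqrt hq0
  have hdR : HasDerivAt (fun y => 2 * Real.sqrt (-(u y t1 t2) / ((v y t1 t2) ^ 2 - 1)) * v y t1 t2
      + px u y t1 t2 / u y t1 t2) _ x :=
    ((hds.const_mul 2).mul hdv).add (hdw.div hdu hU)
  have hfeB : (fun y => pt1 u y t1 t2)
      = fun y => 2 * Real.sqrt (-(u y t1 t2) / ((v y t1 t2) ^ 2 - 1)) * v y t1 t2
          + px u y t1 t2 / u y t1 t2 := funext fun y => hB y t1 t2
  have hWt1 := (Aux.pt1_px_comm hus x t1 t2).trans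
    ((congrArg (fun f : ℝ → ℝ => deriv f x) hfeB).trans hdR.deriv)
  -- t1-direction HasDerivAt facts
  have hd1u : HasDerivAt (fun s => u x s t2) (pt1 u x t1 t2) t1 := Aux.hasDerivAt_pt1 hus x t1 t2
  have hd1v : HasDerivAt (fun s => v x s t2) (pt1 v x t1 t2) t1 := Aux.hasDerivAt_pt1 hvs x t1 t2
  have hd1w : HasDerivAt (fun s => px u x s t2) (pt1 (px u) x t1 t2) t1 :=
    Aux.hasDerivAt_pt1 hws x t1 t2
  have hd1q : HasDerivAt (fun s => -(u x s t2) / ((v x s t2) ^ 2 - 1)) _ t1 :=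
    hd1u.neg.div ((hd1v.pow 2).sub_const 1) hden
  have hd1s := hd1q.sqrt hq0
  have hd1R : HasDerivAt (fun s => 2 * Real.sqrt (-(u x s t2) / ((v x s t2) ^ 2 - 1)) * v x s t2
      + px u x s t2 / u x s t2) _ t1 :=
    ((hd1s.const_mul 2).mul hd1v).add (hd1w.div hd1u hU)
  have hfeB1 : (fun s => pt1 u x s t2)
      = fun s => 2 * Real.sqrt (-(u x s t2) / ((v x s t2) ^ 2 - 1)) * v x s t2
          + px u x s t2 / u x s t2 := funext fun s => hB x s t2
  -- rewrite the goal
  rw [show px (px (fun a b c => 1 / u a b c)) x t1 t2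
      = deriv (fun y => px (fun a b c => 1 / u a b c) y t1 t2) x from rfl, hfe1, hd1.deriv]
  rw [show pt1 (pt1 u) x t1 t2 = deriv (fun s => pt1 u x s t2) t1 from rfl, hfeB1, hd1R.deriv]
  rw [hWt1, hA x t1 t2, hB x t1 t2]
  have harg : -(u x t1 t2) / ((v x t1 t2) ^ 2 - 1)
      = (-((v x t1 t2) ^ 2 - 1) / u x t1 t2)⁻¹ := by
    rw [inv_div, div_neg, ← neg_div]
  have hT : Real.sqrt (-(u x t1 t2) / ((v x t1 t2) ^ 2 - 1))
      = (Real.sqrt (-((v x t1 t2) ^ 2 - 1) / u x t1 t2))⁻¹ := by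
    rw [harg, Real.sqrt_inv]
  have hS2 : (Real.sqrt (-((v x t1 t2) ^ 2 - 1) / u x t1 t2)) ^ 2
      = -((v x t1 t2) ^ 2 - 1) / u x t1 t2 := Real.sq_sqrt hpos.le
  have hSpos : 0 < Real.sqrt (-((v x t1 t2) ^ 2 - 1) / u x t1 t2) := Real.sqrt_pos.2 hpos
  rw [hT]
  simp only [Pi.neg_apply]
  set S := Real.sqrt (-((v x t1 t2) ^ 2 - 1) / u x t1 t2) with hSdef
  set U := u x t1 t2 with hUdef
  set V := v x t1 t2 with hVdef
  set W := px u x t1 t2 with hWdef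
  set Z := px (px u) x t1 t2 with hZdef
  set Vx := px v x t1 t2 with hVxdef
  have hS2' : S ^ 2 * U = -(V ^ 2 - 1) := by
    rw [hS2]; field_simp
  have hSne : S ≠ 0 := ne_of_gt hSpos
  field_simp
  linear_combination (2*U^2*V*W - 2*U^2*V^3*W - 2*S*U^4*V^2) * hS2'
end
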